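/- Let α ∈ (1/2,1), σ > 0, φ(t) = ασ(1+σt)^{-(α+1)} with tail Φ̄(t) = (1+σt)^{-α}, let ζ ∈ (0,1) and let R_ζ(t) = ∑_{k=1}^∞ ζ^k φ^{*k}(t). Then for every t ≥ 0: Φ̄(t) + (Φ̄ * R_ζ)(t) = ((1−ζ)/ζ) ∫_t^∞ R_ζ(s) ds. -/

import Mathlib

open MeasureTheory Real Filter Set

/-- Convolution of two functions on `[0,∞)`: `(f * g)(t) = ∫_0^t f(t-s) g(s) ds`. -/
noncomputable def conv (f g : ℝ → ℝ) : ℝ → ℝ := fun t => ∫ s in (0:ℝ)..t, f (t - s) * g s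

/-- Convolution powers: `convPow f k = f^{*(k+1)}`, i.e. `convPow f 0 = f`. -/
noncomputable def convPow (f : ℝ → ℝ) : ℕ → ℝ → ℝ
  | 0 => f
  | (k + 1) => conv f (convPow f k)

/-!
Write `Tₖ(t) = ∫_t^∞ φ^{*(k+1)}`. For any probability density `φ` on `[0,∞)` with tail `Φ̄`,
Fubini gives the renewal identity `T_{k+1} = T_k + Φ̄ * φ^{*(k+1)}`, and `T₀ = Φ̄`. Since
`0 ≤ Tₖ ≤ 1`, the resolvent series may be integrated termwise, so both sides become power series
in `ζ` with coefficients `Tₖ(t)`, and the identity is summation by parts: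
`T₀ + ∑ ζ^{k+1} (T_{k+1} - Tₖ) = (1 - ζ)/ζ · ∑ ζ^{k+1} Tₖ`.
The Pareto form of `φ` enters only through `∫_t^∞ φ = (1 + σt)^{-α}`.
-/

open Topology

section Convolution

variable {f g : ℝ → ℝ}

theorem indicator_conv (f g : ℝ → ℝ) :
    (Ioi 0).indicator (conv f g) = posConvolution g f (ContinuousLinearMap.mul ℝ ℝ) volume := by
  ext x
  by_cases hx : x ∈ Ioi (0:ℝ)
  · simp [posConvolution, conv, hx, mul_comm]
  · simp [posConvolution, hx]

theorem conv_eq_integral_indicator_mul {u : ℝ} (hu : 0 < u) :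
    conv f g u = ∫ s, (Ioi 0).indicator g s * (Ioi 0).indicator f (u - s) := by
  have h := congrFun (indicator_conv f g) u
  rwa [indicator_of_mem (mem_Ioi.2 hu), posConvolution_eq_convolution_indicator g f _ volume,
    convolution_def] at h

theorem integrableOn_conv (hf : IntegrableOn f (Ioi 0)) (hg : IntegrableOn g (Ioi 0)) :
    IntegrableOn (conv f g) (Ioi 0) := by
  rw [← integrable_indicator_iff measurableSet_Ioi, indicator_conv]
  exact integrable_posConvolution hg hf _

theorem integral_conv (hf : IntegrableOn f (Ioi 0)) (hg : IntegrableOn g (Ioi 0)) :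
    ∫ x in Ioi 0, conv f g x = (∫ x in Ioi 0, f x) * ∫ x in Ioi 0, g x := by
  have h := integral_posConvolution hg hf (ContinuousLinearMap.mul ℝ ℝ)
  simp only [ContinuousLinearMap.mul_apply'] at h
  rw [mul_comm, ← h]
  simp only [conv, mul_comm]

theorem conv_nonneg (hf : ∀ x, 0 ≤ x → 0 ≤ f x) (hg : ∀ x, 0 ≤ x → 0 ≤ g x) {x : ℝ}
    (hx : 0 ≤ x) : 0 ≤ conv f g x :=
  intervalIntegral.integral_nonneg hx fun _ hs =>
    mul_nonneg (hf _ (sub_nonneg.2 hs.2)) (hg _ hs.1)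

theorem integral_Ioi_indicator_comp_sub (f : ℝ → ℝ) (t s : ℝ) :
    ∫ u in Ioi t, (Ioi 0).indicator f (u - s) = ∫ v in Ioi (max (t - s) 0), f v := by
  have h : (Ioi t).indicator (fun u => (Ioi 0).indicator f (u - s))
      = fun u => (Ioi (t - s)).indicator ((Ioi 0).indicator f) (u - s) := by
    ext u
    simp only [indicator, mem_Ioi, sub_lt_sub_iff_right]
  rw [← integral_indicator measurableSet_Ioi, h, integral_sub_right_eq_self, indicator_indicator,
    Ioi_inter_Ioi, integral_indicator measurableSet_Ioi]

theorem integrable_convolution_integrand_restrict (hf : IntegrableOn f (Ioi 0))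
    (hg : IntegrableOn g (Ioi 0)) (t : ℝ) :
    Integrable (Function.uncurry fun u s => (Ioi 0).indicator g s * (Ioi 0).indicator f (u - s))
      ((volume.restrict (Ioi t)).prod volume) := by
  rw [← integrable_indicator_iff measurableSet_Ioi] at hf hg
  have h := hg.convolution_integrand (ContinuousLinearMap.mul ℝ ℝ) hf (μ := volume)
  rw [← Measure.restrict_univ (μ := volume), Measure.prod_restrict, Measure.restrict_univ]
  exact h.integrableOn

theorem integrable_indicator_mul_integral_Ioi (hf : IntegrableOn f (Ioi 0))
    (hg : IntegrableOn g (Ioi 0)) (t : ℝ) :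
    Integrable fun s => (Ioi 0).indicator g s * ∫ v in Ioi (max (t - s) 0), f v := by
  simpa only [Function.uncurry_apply_pair, integral_const_mul, integral_Ioi_indicator_comp_sub]
    using (integrable_convolution_integrand_restrict hf hg t).integral_prod_right

theorem integrableOn_integral_Ioi_sub_mul (hf : IntegrableOn f (Ioi 0))
    (hg : IntegrableOn g (Ioi 0)) (t : ℝ) :
    IntegrableOn (fun s => (∫ v in Ioi (t - s), f v) * g s) (Ioc 0 t) :=
  (integrable_indicator_mul_integral_Ioi hf hg t).integrableOn.congr_fun (fun s hs => by
    simp [indicator_of_mem (mem_Ioi.2 hs.1), max_eq_left (sub_nonneg.2 hs.2), mul_comm])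
    measurableSet_Ioc

theorem integral_Ioi_conv_eq_integral_indicator_mul (hf : IntegrableOn f (Ioi 0))
    (hg : IntegrableOn g (Ioi 0)) {t : ℝ} (ht : 0 ≤ t) :
    ∫ u in Ioi t, conv f g u = ∫ s, (Ioi 0).indicator g s * ∫ v in Ioi (max (t - s) 0), f v := by
  calc ∫ u in Ioi t, conv f g u
      = ∫ u in Ioi t, ∫ s, (Ioi 0).indicator g s * (Ioi 0).indicator f (u - s) :=
        setIntegral_congr_fun measurableSet_Ioi fun u hu =>
          conv_eq_integral_indicator_mul (ht.trans_lt hu)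
    _ = ∫ s, ∫ u in Ioi t, (Ioi 0).indicator g s * (Ioi 0).indicator f (u - s) :=
        integral_integral_swap (integrable_convolution_integrand_restrict hf hg t)
    _ = _ := by simp only [integral_const_mul, integral_Ioi_indicator_comp_sub]

end Convolution

structure IsDensityOnIci (f : ℝ → ℝ) : Prop where
  integrableOn : IntegrableOn f (Ioi 0)
  nonneg : ∀ x, 0 ≤ x → 0 ≤ f x
  integral_eq_one : ∫ x in Ioi 0, f x = 1

namespace IsDensityOnIci

variable {f g : ℝ → ℝ}

protected theorem conv (hf : IsDensityOnIci f) (hg : IsDensityOnIci g) :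
    IsDensityOnIci (conv f g) where
  integrableOn := integrableOn_conv hf.integrableOn hg.integrableOn
  nonneg _ hx := conv_nonneg hf.nonneg hg.nonneg hx
  integral_eq_one := by
    rw [integral_conv hf.integrableOn hg.integrableOn, hf.integral_eq_one, hg.integral_eq_one,
      one_mul]

protected theorem convPow (hf : IsDensityOnIci f) : ∀ k, IsDensityOnIci (convPow f k)
  | 0 => hf
  | k + 1 => hf.conv (hf.convPow k)

theorem setIntegral_norm_le_one (hf : IsDensityOnIci f) {s : Set ℝ} (hs : s ⊆ Ioi 0) :
    ∫ x in s, ‖f x‖ ≤ 1 := by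
  calc ∫ x in s, ‖f x‖
      ≤ ∫ x in Ioi 0, ‖f x‖ :=
        setIntegral_mono_set hf.integrableOn.norm (ae_of_all _ fun _ => norm_nonneg _)
          (ae_of_all _ hs)
    _ = 1 := by
        rw [← hf.integral_eq_one]
        exact setIntegral_congr_fun measurableSet_Ioi fun x hx =>
          Real.norm_of_nonneg (hf.nonneg x (le_of_lt hx))

theorem integral_Ioi_mem_Icc (hf : IsDensityOnIci f) {x : ℝ} (hx : 0 ≤ x) :
    ∫ v in Ioi x, f v ∈ Icc 0 1 :=
  ⟨setIntegral_nonneg measurableSet_Ioi fun v hv => hf.nonneg v (hx.trans hv.le),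
    (le_abs_self _).trans <| (abs_integral_le_integral_abs).trans <|
      hf.setIntegral_norm_le_one (Ioi_subset_Ioi hx)⟩

theorem integral_Ioi_conv (hf : IsDensityOnIci f) (hg : IntegrableOn g (Ioi 0)) {t : ℝ}
    (ht : 0 ≤ t) :
    ∫ u in Ioi t, conv f g u
      = (∫ u in Ioi t, g u) + ∫ s in Ioc 0 t, (∫ v in Ioi (t - s), f v) * g s := by
  set H := fun s => (Ioi 0).indicator g s * ∫ v in Ioi (max (t - s) 0), f v
  have hH : Integrable H := integrable_indicator_mul_integral_Ioi hf.integrableOn hg t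
  have hH_Ioc : ∫ s in Ioc 0 t, H s = ∫ s in Ioc 0 t, (∫ v in Ioi (t - s), f v) * g s :=
    setIntegral_congr_fun measurableSet_Ioc fun s hs => by
      simp [H, indicator_of_mem (mem_Ioi.2 hs.1), max_eq_left (sub_nonneg.2 hs.2), mul_comm]
  have hH_Ioi : ∫ s in Ioi t, H s = ∫ s in Ioi t, g s :=
    setIntegral_congr_fun measurableSet_Ioi fun s hs => by
      simp only [H, indicator_of_mem (mem_Ioi.2 (ht.trans_lt hs))]
      rw [max_eq_right (sub_nonpos.2 (le_of_lt hs)), hf.integral_eq_one, mul_one]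
  rw [integral_Ioi_conv_eq_integral_indicator_mul hf.integrableOn hg ht]
  change ∫ s, H s = _
  rw [← setIntegral_eq_integral_of_forall_compl_eq_zero (s := Ioi 0) fun s hs => by
      simp [H, indicator_of_notMem hs],
    ← Ioc_union_Ioi_eq_Ioi ht, setIntegral_union (Ioc_disjoint_Ioi le_rfl) measurableSet_Ioi
      hH.integrableOn hH.integrableOn, hH_Ioc, hH_Ioi, add_comm]

end IsDensityOnIci

theorem summable_pow_succ {ζ : ℝ} (hζ0 : 0 ≤ ζ) (hζ1 : ζ < 1) :
    Summable fun k : ℕ => ζ ^ (k + 1) :=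
  (summable_nat_add_iff 1).2 (summable_geometric_of_lt_one hζ0 hζ1)

theorem integral_tsum_pow_succ_mul {X : Type*} [MeasurableSpace X] {μ : Measure X}
    {F : ℕ → X → ℝ} {ζ C : ℝ} (hζ0 : 0 ≤ ζ) (hζ1 : ζ < 1) (hF : ∀ k, Integrable (F k) μ)
    (hC : ∀ k, ∫ x, ‖F k x‖ ∂μ ≤ C) :
    ∫ x, ∑' k, ζ ^ (k + 1) * F k x ∂μ = ∑' k, ζ ^ (k + 1) * ∫ x, F k x ∂μ := by
  have hsum : Summable fun k => ∫ x, ‖ζ ^ (k + 1) * F k x‖ ∂μ := by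
    refine Summable.of_nonneg_of_le (fun k => integral_nonneg fun _ => norm_nonneg _)
      (fun k => ?_) ((summable_pow_succ hζ0 hζ1).mul_right C)
    simp only [norm_mul, norm_pow, Real.norm_of_nonneg hζ0, integral_const_mul]
    exact mul_le_mul_of_nonneg_left (hC k) (by positivity)
  rw [← integral_tsum_of_summable_integral_norm (fun k => (hF k).const_mul _) hsum]
  simp only [integral_const_mul]

theorem add_tsum_pow_succ_mul_sub {T : ℕ → ℝ} {ζ C : ℝ} (hζ0 : 0 < ζ) (hζ1 : ζ < 1)
    (hT : ∀ k, |T k| ≤ C) :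
    T 0 + ∑' k, ζ ^ (k + 1) * (T (k + 1) - T k) = (1 - ζ) / ζ * ∑' k, ζ ^ (k + 1) * T k := by
  have hsummable : ∀ {T' : ℕ → ℝ}, (∀ k, |T' k| ≤ C) → Summable fun k => ζ ^ (k + 1) * T' k :=
    fun hT' => .of_norm_bounded ((summable_pow_succ hζ0.le hζ1).mul_right C) fun k => by
      rw [norm_mul, norm_pow, Real.norm_of_nonneg hζ0.le, Real.norm_eq_abs]
      exact mul_le_mul_of_nonneg_left (hT' k) (by positivity)
  have hS := hsummable hT
  have hS' := hsummable fun k => hT (k + 1)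
  have hshift : ∑' k, ζ ^ (k + 1) * T k = ζ * T 0 + ζ * ∑' k, ζ ^ (k + 1) * T (k + 1) := by
    rw [hS.tsum_eq_zero_add, ← tsum_mul_left]
    congr 1
    · ring
    · exact tsum_congr fun k => by ring
  simp only [mul_sub]
  rw [hS'.tsum_sub hS, hshift]
  field_simp
  ring

noncomputable def convResolvent (f : ℝ → ℝ) (ζ t : ℝ) : ℝ := ∑' k : ℕ, ζ ^ (k + 1) * convPow f k t

namespace IsDensityOnIci

variable {f Φbar : ℝ → ℝ} {ζ t : ℝ}

theorem integral_Ioi_convResolvent (hf : IsDensityOnIci f) (hζ0 : 0 ≤ ζ) (hζ1 : ζ < 1)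
    (ht : 0 ≤ t) :
    ∫ s in Ioi t, convResolvent f ζ s = ∑' k, ζ ^ (k + 1) * ∫ s in Ioi t, convPow f k s :=
  integral_tsum_pow_succ_mul hζ0 hζ1
    (fun k => (hf.convPow k).integrableOn.mono_set (Ioi_subset_Ioi ht))
    (fun k => (hf.convPow k).setIntegral_norm_le_one (Ioi_subset_Ioi ht))

theorem conv_convResolvent (hf : IsDensityOnIci f) (hΦ : ∀ x, 0 ≤ x → Φbar x = ∫ v in Ioi x, f v)
    (hζ0 : 0 ≤ ζ) (hζ1 : ζ < 1) (ht : 0 ≤ t) :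
    conv Φbar (convResolvent f ζ) t = ∑' k, ζ ^ (k + 1) *
      ((∫ s in Ioi t, convPow f (k + 1) s) - ∫ s in Ioi t, convPow f k s) := by
  set G : ℕ → ℝ → ℝ := fun k s => (∫ v in Ioi (t - s), f v) * convPow f k s
  have hG_int : ∀ k, IntegrableOn (G k) (Ioc 0 t) := fun k =>
    integrableOn_integral_Ioi_sub_mul hf.integrableOn (hf.convPow k).integrableOn t
  have hG_norm : ∀ k, ∫ s in Ioc 0 t, ‖G k s‖ ≤ 1 := fun k =>
    calc ∫ s in Ioc 0 t, ‖G k s‖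
        ≤ ∫ s in Ioc 0 t, ‖convPow f k s‖ :=
          setIntegral_mono_on (hG_int k).norm
            ((hf.convPow k).integrableOn.mono_set Ioc_subset_Ioi_self).norm measurableSet_Ioc
            fun s hs => by
              have h := hf.integral_Ioi_mem_Icc (sub_nonneg.2 hs.2)
              rw [norm_mul, Real.norm_of_nonneg h.1]
              exact mul_le_of_le_one_left (norm_nonneg _) h.2
      _ ≤ 1 := (hf.convPow k).setIntegral_norm_le_one Ioc_subset_Ioi_self
  calc conv Φbar (convResolvent f ζ) t = ∫ s in Ioc 0 t, ∑' k, ζ ^ (k + 1) * G k s := by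
        rw [conv, intervalIntegral.integral_of_le ht]
        refine setIntegral_congr_fun measurableSet_Ioc fun s hs => ?_
        simp only [G, convResolvent, hΦ _ (sub_nonneg.2 hs.2), ← tsum_mul_left, mul_left_comm]
    _ = ∑' k, ζ ^ (k + 1) * ∫ s in Ioc 0 t, G k s :=
        integral_tsum_pow_succ_mul hζ0 hζ1 hG_int hG_norm
    _ = _ := by
        congr! 2 with k
        rw [convPow, hf.integral_Ioi_conv (hf.convPow k).integrableOn ht, add_sub_cancel_left]

theorem tail_add_conv_convResolvent (hf : IsDensityOnIci f)
    (hΦ : ∀ x, 0 ≤ x → Φbar x = ∫ v in Ioi x, f v) (hζ0 : 0 < ζ) (hζ1 : ζ < 1) (ht : 0 ≤ t) :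
    Φbar t + conv Φbar (convResolvent f ζ) t = (1 - ζ) / ζ * ∫ s in Ioi t, convResolvent f ζ s := by
  rw [hf.conv_convResolvent hΦ hζ0.le hζ1 ht, hf.integral_Ioi_convResolvent hζ0.le hζ1 ht, hΦ t ht]
  refine add_tsum_pow_succ_mul_sub (T := fun k => ∫ s in Ioi t, convPow f k s) (C := 1) hζ0 hζ1
    fun k => ?_
  have h := (hf.convPow k).integral_Ioi_mem_Icc ht
  exact abs_le.2 ⟨by linarith [h.1], h.2⟩

end IsDensityOnIci

section Pareto

variable {α σ x : ℝ}

theorem hasDerivAt_neg_one_add_mul_rpow_neg (hx : 0 < 1 + σ * x) :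
    HasDerivAt (fun y => -(1 + σ * y) ^ (-α)) (α * σ * (1 + σ * x) ^ (-(α + 1))) x := by
  have h := ((Real.hasDerivAt_rpow_const (p := -α) (Or.inl hx.ne')).comp x
    (((hasDerivAt_id x).const_mul σ).const_add 1)).neg
  refine h.congr_deriv ?_
  rw [show -(α + 1) = -α - 1 by ring, mul_one]
  ring

theorem tendsto_neg_one_add_mul_rpow_neg (hα : 0 < α) (hσ : 0 < σ) :
    Tendsto (fun y => -(1 + σ * y) ^ (-α)) atTop (𝓝 0) := by
  simpa using ((tendsto_rpow_neg_atTop hα).comp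
    (tendsto_atTop_add_const_left _ 1 (tendsto_id.const_mul_atTop hσ))).neg

theorem pareto_nonneg (hα : 0 < α) (hσ : 0 < σ) (hx : 0 ≤ x) :
    0 ≤ α * σ * (1 + σ * x) ^ (-(α + 1)) := by
  have : 0 < 1 + σ * x := by positivity
  positivity

theorem integral_Ioi_pareto (hα : 0 < α) (hσ : 0 < σ) (hx : 0 ≤ x) :
    ∫ y in Ioi x, α * σ * (1 + σ * y) ^ (-(α + 1)) = (1 + σ * x) ^ (-α) := by
  rw [integral_Ioi_of_hasDerivAt_of_nonneg'
    (fun y hy => hasDerivAt_neg_one_add_mul_rpow_neg (by nlinarith [mem_Ici.1 hy]))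
    (fun y hy => pareto_nonneg hα hσ (hx.trans (le_of_lt hy)))
    (tendsto_neg_one_add_mul_rpow_neg hα hσ), zero_sub, neg_neg]

theorem isDensityOnIci_pareto (hα : 0 < α) (hσ : 0 < σ) :
    IsDensityOnIci fun y => α * σ * (1 + σ * y) ^ (-(α + 1)) where
  integrableOn := integrableOn_Ioi_deriv_of_nonneg'
    (fun y hy => hasDerivAt_neg_one_add_mul_rpow_neg (by nlinarith [mem_Ici.1 hy]))
    (fun y hy => pareto_nonneg hα hσ (le_of_lt hy)) (tendsto_neg_one_add_mul_rpow_neg hα hσ)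
  nonneg _ hy := pareto_nonneg hα hσ hy
  integral_eq_one := by rw [integral_Ioi_pareto hα hσ le_rfl, mul_zero, add_zero, one_rpow]

end Pareto

theorem tail_identity_for_resolvent
    (α σ ζ : ℝ) (hα : α ∈ Set.Ioo (1/2 : ℝ) 1) (hσ : 0 < σ) (hζ : ζ ∈ Set.Ioo (0:ℝ) 1)
    (φ : ℝ → ℝ) (hφ : ∀ t : ℝ, φ t = α * σ * (1 + σ * t) ^ (-(α + 1)))
    (Φbar : ℝ → ℝ) (hΦbar : ∀ t : ℝ, Φbar t = (1 + σ * t) ^ (-α))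
    (R : ℝ → ℝ) (hR : ∀ t : ℝ, R t = ∑' k : ℕ, ζ ^ (k + 1) * convPow φ k t) :
    ∀ t : ℝ, 0 ≤ t →
      Φbar t + conv Φbar R t = (1 - ζ) / ζ * ∫ s in Set.Ioi t, R s := by
  intro t ht
  have hα0 : 0 < α := by linarith [hα.1]
  obtain rfl : φ = fun y => α * σ * (1 + σ * y) ^ (-(α + 1)) := funext hφ
  obtain rfl : R = convResolvent _ ζ := funext hR
  exact (isDensityOnIci_pareto hα0 hσ).tail_add_conv_convResolvent
    (fun x hx => by rw [hΦbar, integral_Ioi_pareto hα0 hσ hx]) hζ.1 hζ.2 ht
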